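/- arXiv:2507.08273 — 3 statements merged into one kernel-verified Lean document; each statement's English description precedes it below -/
import Mathlib

section
/- Let $\alpha \leqslant 0$, $s \in \mathbb{R}$, $N_0 > 0$, and $\lambda > 1$. Suppose $\phi$ is a tempered distribution on $\mathbb{R}^n$ with $\phi \in E^{\alpha}_s$ and $\mathrm{supp}\,\widehat\phi \subset \{\xi : |\xi| \geqslant N_0\}$, and define the scaled function $\phi_\lambda(x) := \phi(\lambda x)$. Then $\|\phi_\lambda\|_{E^{\alpha}_s} \lesssim \lambda^{-\frac{n}{2} + \max\{s, 0\}}\, 2^{\alpha(\lambda-1)N_0}\, \|\phi\|_{E^{\alpha}_s}$. In particular, when $\alpha < 0$, $\|\phi_\lambda\|_{E^\alpha_s} \to 0$ as $\lambda \to +\infty$. -/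
open MeasureTheory Filter
open scoped NNReal ENNReal Topology

/-- The `E^α_s` norm on the Fourier side: `‖⟨ξ⟩^s 2^{α|ξ|} f̂(ξ)‖_{L²}`. -/
noncomputable def EalphaNorm (n : ℕ) (α s : ℝ) (fhat : EuclideanSpace ℝ (Fin n) → ℂ) : ℝ≥0∞ :=
  eLpNorm (fun ξ => (1 + ‖ξ‖^2) ^ (s/2) * (2:ℝ) ^ (α * ‖ξ‖) * ‖fhat ξ‖) 2 volume

lemma comp_smul_eLpNorm (n : ℕ) (H : EuclideanSpace ℝ (Fin n) → ℝ)
    (hH : AEMeasurable H volume) (c : ℝ) (hc : c ≠ 0) :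
    eLpNorm (fun ξ => H (c • ξ)) 2 volume
      = ENNReal.ofReal (|c ^ n|⁻¹) ^ (1 / (2:ℝ≥0∞).toReal) * eLpNorm H 2 volume := by
  have hd : Module.finrank ℝ (EuclideanSpace ℝ (Fin n)) = n := finrank_euclideanSpace_fin
  have hmap : Measure.map (c • ·) (volume : Measure (EuclideanSpace ℝ (Fin n)))
      = ENNReal.ofReal (|c ^ n|⁻¹) • volume := by
    rw [Measure.map_addHaar_smul volume hc, hd, abs_inv]
  have h2 : ((2:ℝ≥0∞)) ≠ 0 := two_ne_zero
  have h2' : ((2:ℝ≥0∞)) ≠ ⊤ := ENNReal.ofNat_ne_top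
  rw [eLpNorm_eq_lintegral_rpow_enorm_toReal h2 h2', eLpNorm_eq_lintegral_rpow_enorm_toReal h2 h2']
  have hInt : AEMeasurable (fun ξ => (‖H ξ‖ₑ) ^ (2:ℝ≥0∞).toReal)
      (Measure.map (c • ·) (volume : Measure (EuclideanSpace ℝ (Fin n)))) := by
    rw [hmap]
    exact (ENNReal.continuous_rpow_const.measurable.comp_aemeasurable hH.enorm).smul_measure _
  have hcs : AEMeasurable (fun ξ : EuclideanSpace ℝ (Fin n) => c • ξ) volume :=
    (measurable_const_smul c).aemeasurable
  have hmapint := lintegral_map' hInt hcs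
  rw [hmap, lintegral_smul_measure, smul_eq_mul] at hmapint
  rw [← hmapint, ENNReal.mul_rpow_of_nonneg _ _ (by positivity)]

/-- Scaling in `E^α_s` for `α ≤ 0`: if `supp f̂ ⊆ {|ξ| ≥ N₀}` and `φ_λ(x) = φ(λx)`
(so `φ̂_λ(ξ) = λ^{-n} φ̂(ξ/λ)`), then
`‖φ_λ‖_{E^α_s} ≲ λ^{-n/2+max{s,0}} 2^{α(λ-1)N₀} ‖φ‖_{E^α_s}` for all `λ > 1`;
in particular for `α < 0` the scaled norm tends to `0` as `λ → ∞`. -/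
theorem stmt7 (n : ℕ) (hn : 1 ≤ n) (α s N₀ : ℝ) (hα : α ≤ 0) (hN : 0 < N₀) :
    ∃ C : ℝ≥0, 0 < C ∧ ∀ (fhat : EuclideanSpace ℝ (Fin n) → ℂ),
      AEStronglyMeasurable fhat volume →
      (∀ ξ : EuclideanSpace ℝ (Fin n), ‖ξ‖ < N₀ → fhat ξ = 0) →
      EalphaNorm n α s fhat < ⊤ →
      (∀ lam : ℝ, 1 < lam →
        EalphaNorm n α s (fun ξ => (lam ^ (-(n:ℝ)) : ℝ) • fhat (lam⁻¹ • ξ))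
          ≤ ENNReal.ofReal ((C : ℝ) * lam ^ (-(n:ℝ)/2 + max s 0) * (2:ℝ) ^ (α * (lam - 1) * N₀)) *
            EalphaNorm n α s fhat) ∧
      (α < 0 →
        Tendsto (fun lam : ℝ =>
            EalphaNorm n α s (fun ξ => (lam ^ (-(n:ℝ)) : ℝ) • fhat (lam⁻¹ • ξ)))
          atTop (𝓝 0)) := by
  classical
  refine ⟨1, one_pos, fun fhat hmeas hsupp hfin => ?_⟩
  set G : EuclideanSpace ℝ (Fin n) → ℝ :=
    fun η => (1 + ‖η‖ ^ 2) ^ (s / 2) * (2:ℝ) ^ (α * ‖η‖) * ‖fhat η‖ with hGdef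
  have hGmeas : AEMeasurable G volume := by
    have hw1 : Continuous fun η : EuclideanSpace ℝ (Fin n) => (1 + ‖η‖ ^ 2) ^ (s / 2) := by
      apply Continuous.rpow_const (by continuity)
      intro x
      left
      positivity
    have hw2 : Continuous fun η : EuclideanSpace ℝ (Fin n) => (2:ℝ) ^ (α * ‖η‖) := by
      apply Continuous.rpow continuous_const ((continuous_const.mul continuous_norm : Continuous fun η : EuclideanSpace ℝ (Fin n) => α * ‖η‖))
      intro x
      exact Or.inl two_ne_zero
    exact ((hw1.aemeasurable.mul hw2.aemeasurable).mul hmeas.norm.aemeasurable)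
  have key : ∀ lam : ℝ, 1 < lam →
      EalphaNorm n α s (fun ξ => (lam ^ (-(n:ℝ)) : ℝ) • fhat (lam⁻¹ • ξ))
        ≤ ENNReal.ofReal (lam ^ (-(n:ℝ)/2 + max s 0) * (2:ℝ) ^ (α * (lam - 1) * N₀)) *
            EalphaNorm n α s fhat := by
    intro lam hlam
    have hl0 : (0:ℝ) < lam := lt_trans one_pos hlam
    have hlinv : lam⁻¹ ≠ 0 := inv_ne_zero hl0.ne'
    set r : ℝ := lam ^ (-(n:ℝ)) with hr
    have hr0 : 0 < r := Real.rpow_pos_of_pos hl0 _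
    set K : ℝ := lam ^ (max s 0) * (2:ℝ) ^ (α * (lam - 1) * N₀) with hK
    have hK0 : 0 < K := by
      apply mul_pos (Real.rpow_pos_of_pos hl0 _) (Real.rpow_pos_of_pos two_pos _)
    -- pointwise bound
    have hpt : ∀ ξ : EuclideanSpace ℝ (Fin n),
        ‖(1 + ‖ξ‖ ^ 2) ^ (s / 2) * (2:ℝ) ^ (α * ‖ξ‖) *
          ‖(r : ℝ) • fhat (lam⁻¹ • ξ)‖‖ ≤ (K * r) * G (lam⁻¹ • ξ) := by
      intro ξ
      set η := lam⁻¹ • ξ with hη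
      have hnorm : ‖ξ‖ = lam * ‖η‖ := by
        rw [hη, norm_smul, Real.norm_eq_abs, abs_of_pos (inv_pos.2 hl0)]
        field_simp
      have hsc : ‖(r : ℝ) • fhat η‖ = r * ‖fhat η‖ := by
        rw [norm_smul, Real.norm_eq_abs, abs_of_pos hr0]
      have hLHS : ‖(1 + ‖ξ‖ ^ 2) ^ (s / 2) * (2:ℝ) ^ (α * ‖ξ‖) * ‖(r : ℝ) • fhat η‖‖
          = (1 + ‖ξ‖ ^ 2) ^ (s / 2) * (2:ℝ) ^ (α * ‖ξ‖) * (r * ‖fhat η‖) := by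
        rw [hsc, Real.norm_eq_abs, abs_of_nonneg (by positivity)]
      rcases eq_or_ne (fhat η) 0 with h0 | h0
      · rw [hLHS]
        simp only [hGdef, h0, norm_zero, mul_zero]
        exact le_refl 0
      · have hNη : N₀ ≤ ‖η‖ := le_of_not_gt fun h => h0 (hsupp η h)
        have ht0 : (0:ℝ) ≤ ‖η‖ := norm_nonneg _
        have hA : (1 + ‖ξ‖ ^ 2) ^ (s / 2) ≤ lam ^ (max s 0) * (1 + ‖η‖ ^ 2) ^ (s / 2) := by
          rcases le_or_gt 0 s with hs | hs
          · have h2cast : lam ^ ((2:ℕ):ℝ) = lam ^ (2:ℕ) := Real.rpow_natCast lam 2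
            have h1 : 1 + ‖ξ‖ ^ 2 ≤ lam ^ ((2:ℕ):ℝ) * (1 + ‖η‖ ^ 2) := by
              rw [hnorm, h2cast]
              nlinarith [sq_nonneg ‖η‖]
            calc (1 + ‖ξ‖ ^ 2) ^ (s/2)
                ≤ (lam ^ ((2:ℕ):ℝ) * (1 + ‖η‖ ^ 2)) ^ (s/2) :=
                  Real.rpow_le_rpow (by positivity) h1 (by positivity)
              _ = lam ^ (max s 0) * (1 + ‖η‖ ^ 2) ^ (s/2) := by
                  rw [Real.mul_rpow (by positivity) (by positivity),
                    ← Real.rpow_mul hl0.le, max_eq_left hs,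
                    show ((2:ℕ):ℝ) * (s/2) = s by push_cast; ring]
          · have hmax : max s 0 = 0 := max_eq_right hs.le
            have h1 : 1 + ‖η‖ ^ 2 ≤ 1 + ‖ξ‖ ^ 2 := by
              rw [hnorm]
              nlinarith [mul_nonneg (mul_nonneg (by linarith : (0:ℝ) ≤ lam - 1)
                (by linarith : (0:ℝ) ≤ lam + 1)) (sq_nonneg ‖η‖)]
            have h2 := Real.rpow_le_rpow_of_nonpos (by positivity) h1
              (by linarith : s/2 ≤ 0)
            rw [hmax, Real.rpow_zero, one_mul]
            exact h2
        have hB : (2:ℝ) ^ (α * ‖ξ‖) ≤ (2:ℝ) ^ (α * (lam - 1) * N₀) * (2:ℝ) ^ (α * ‖η‖) := by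
          rw [hnorm, ← Real.rpow_add two_pos]
          apply Real.rpow_le_rpow_of_exponent_le one_le_two
          have hnonpos : α * (lam - 1) ≤ 0 :=
            mul_nonpos_of_nonpos_of_nonneg hα (by linarith)
          have h1 : α * (lam - 1) * ‖η‖ ≤ α * (lam - 1) * N₀ :=
            mul_le_mul_of_nonpos_left hNη hnonpos
          have h2 : α * (lam * ‖η‖) = α * (lam - 1) * ‖η‖ + α * ‖η‖ := by ring
          linarith
        rw [hLHS]
        calc (1 + ‖ξ‖ ^ 2) ^ (s / 2) * (2:ℝ) ^ (α * ‖ξ‖) * (r * ‖fhat η‖)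
            ≤ (lam ^ (max s 0) * (1 + ‖η‖ ^ 2) ^ (s/2) *
                ((2:ℝ) ^ (α * (lam - 1) * N₀) * (2:ℝ) ^ (α * ‖η‖))) * (r * ‖fhat η‖) := by
              apply mul_le_mul _ le_rfl (by positivity) (by positivity)
              exact mul_le_mul hA hB (by positivity) (by positivity)
          _ = (K * r) * G η := by
              simp only [hGdef, hK]
              ring
    have step1 : EalphaNorm n α s (fun ξ => (lam ^ (-(n:ℝ)) : ℝ) • fhat (lam⁻¹ • ξ))
        ≤ eLpNorm (fun ξ => (K * r) * G (lam⁻¹ • ξ)) 2 volume := by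
      unfold EalphaNorm
      exact eLpNorm_mono_real hpt
    have step2 : eLpNorm (fun ξ => (K * r) * G (lam⁻¹ • ξ)) 2 volume
        = (‖K * r‖₊ : ℝ≥0∞) * eLpNorm (fun ξ : EuclideanSpace ℝ (Fin n) => G (lam⁻¹ • ξ)) 2 volume := by
      have h : (fun ξ : EuclideanSpace ℝ (Fin n) => (K * r) * G (lam⁻¹ • ξ))
          = (K * r) • (fun ξ : EuclideanSpace ℝ (Fin n) => G (lam⁻¹ • ξ)) := rfl
      rw [h, eLpNorm_const_smul, enorm_eq_nnnorm]
    have step3 := comp_smul_eLpNorm n G hGmeas lam⁻¹ hlinv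
    have hcoef : (‖K * r‖₊ : ℝ≥0∞) * ENNReal.ofReal (|lam⁻¹ ^ n|⁻¹) ^ (1 / (2:ℝ≥0∞).toReal)
        = ENNReal.ofReal (lam ^ (-(n:ℝ)/2 + max s 0) * (2:ℝ) ^ (α * (lam - 1) * N₀)) := by
      have habs : |lam⁻¹ ^ n|⁻¹ = lam ^ (n:ℝ) := by
        rw [abs_pow, abs_of_pos (inv_pos.2 hl0), inv_pow, inv_inv]
        exact (Real.rpow_natCast lam n).symm
      have h2t : 1 / (2:ℝ≥0∞).toReal = (1:ℝ)/2 := by norm_num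
      rw [← enorm_eq_nnnorm, Real.enorm_eq_ofReal (by positivity), habs, h2t,
        ENNReal.ofReal_rpow_of_pos (Real.rpow_pos_of_pos hl0 _),
        ← ENNReal.ofReal_mul (by positivity)]
      congr 1
      rw [← Real.rpow_mul hl0.le, hK, hr,
        show (-(n:ℝ)/2 + max s 0) = max s 0 + -(n:ℝ) + (n:ℝ) * ((1:ℝ)/2) by ring,
        Real.rpow_add hl0, Real.rpow_add hl0]
      ring
    calc EalphaNorm n α s (fun ξ => (lam ^ (-(n:ℝ)) : ℝ) • fhat (lam⁻¹ • ξ))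
        ≤ eLpNorm (fun ξ => (K * r) * G (lam⁻¹ • ξ)) 2 volume := step1
      _ = (‖K * r‖₊ : ℝ≥0∞) * (ENNReal.ofReal (|lam⁻¹ ^ n|⁻¹) ^ (1 / (2:ℝ≥0∞).toReal)
            * eLpNorm G 2 volume) := by rw [step2, step3]
      _ = ENNReal.ofReal (lam ^ (-(n:ℝ)/2 + max s 0) * (2:ℝ) ^ (α * (lam - 1) * N₀)) *
            EalphaNorm n α s fhat := by
          rw [← mul_assoc, hcoef]
          rfl
  refine ⟨fun lam hlam => ?_, fun hαneg => ?_⟩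
  · simpa using key lam hlam
  · have hl2 : 0 < Real.log 2 := Real.log_pos one_lt_two
    have hb : 0 < -(α * N₀ * Real.log 2) := by
      nlinarith [mul_pos (mul_pos (neg_pos.2 hαneg) hN) hl2]
    have hreal : Tendsto (fun lam : ℝ =>
        lam ^ (-(n:ℝ)/2 + max s 0) * (2:ℝ) ^ (α * (lam - 1) * N₀)) atTop (𝓝 0) := by
      have h1 := (tendsto_rpow_mul_exp_neg_mul_atTop_nhds_zero (-(n:ℝ)/2 + max s 0)
        (-(α * N₀ * Real.log 2)) hb).mul_const (Real.exp (-(α * N₀ * Real.log 2)))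
      rw [zero_mul] at h1
      refine h1.congr fun lam => ?_
      rw [mul_assoc, ← Real.exp_add, Real.rpow_def_of_pos two_pos]
      congr 2
      ring
    have h2 : Tendsto (fun lam : ℝ => ENNReal.ofReal
        (lam ^ (-(n:ℝ)/2 + max s 0) * (2:ℝ) ^ (α * (lam - 1) * N₀))) atTop (𝓝 0) := by
      simpa using ENNReal.tendsto_ofReal hreal
    have hup : Tendsto (fun lam : ℝ => ENNReal.ofReal
        (lam ^ (-(n:ℝ)/2 + max s 0) * (2:ℝ) ^ (α * (lam - 1) * N₀)) *
          EalphaNorm n α s fhat) atTop (𝓝 0) := by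
      have := ENNReal.Tendsto.mul_const h2 (Or.inr hfin.ne)
      rwa [zero_mul] at this
    refine tendsto_of_tendsto_of_tendsto_of_le_of_le' tendsto_const_nhds hup ?_ ?_
    · exact Eventually.of_forall fun lam => zero_le
    · filter_upwards [eventually_gt_atTop 1] with lam hlam using key lam hlam
end

section
/- Let $\tau, \delta, \sigma > 0$. There exists $\varepsilon_0 > 0$ such that for $0 < r \leqslant \varepsilon_0$, the three roots of $\tau\mu^3 + \mu^2 + (\delta+\tau)r^{2\sigma}\mu + r^{2\sigma} = 0$ admit the asymptotic expansions $\mu_1 = -\frac{1}{\tau} + O(r^{2\sigma})$ and $\mu_{2,3} = \pm i r^{\sigma} - \frac{\delta}{2}r^{2\sigma} + O(r^{3\sigma})$ as $r \to 0^+$. In particular, all three roots have negative real part for small $r > 0$. -/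
set_option maxHeartbeats 1000000

lemma mgt_aux (τ δ : ℝ) (hτ : 0 < τ) (hδ : 0 < δ) :
    ∃ amax C : ℝ, 0 < amax ∧ 0 < C ∧ ∀ a : ℝ, 0 < a → a ≤ amax →
      ∃ (μ₁ : ℝ) (μ₂ : ℂ),
        (∀ μ : ℂ, (τ:ℂ)*μ^3 + μ^2 + (((δ+τ)*a : ℝ):ℂ)*μ + ((a:ℝ):ℂ)
          = (τ:ℂ)*(μ-(μ₁:ℂ))*(μ-μ₂)*(μ - (starRingEnd ℂ) μ₂)) ∧
        |μ₁ + 1/τ| ≤ C * a ∧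
        ‖μ₂ - (Complex.I * ((Real.sqrt a : ℝ):ℂ) - ((δ/2 * a : ℝ):ℂ))‖ ≤ C * (a * Real.sqrt a) ∧
        μ₁ < 0 ∧ μ₂.re < 0 := by
  set C₁ : ℝ := (δ+1)*(δ+τ) + τ*(δ+1)^3 + 2*(δ+1)^2 with hC₁
  have hC₁pos : 0 < C₁ := by positivity
  set K : ℝ := τ*C₁ + 1 with hK
  have hKpos : 0 < K := by positivity
  set C₂ : ℝ := 4*δ^2 + K/τ with hC₂
  have hC₂pos : 0 < C₂ := by positivity
  clear_value C₁ K C₂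
  refine ⟨min 1 (min (1/(2*K)) (min (δ/(2*K)) (min (1/(4*δ*τ)) (1/(2*(C₂+δ^2)))))),
    2*δ + K/2 + C₂ + 1, by positivity, by positivity, ?_⟩
  intro a ha hale
  have hτ' : τ ≠ 0 := ne_of_gt hτ
  have hiτpos : 0 < 1/τ := by positivity
  -- extract the smallness conditions
  have ha1 : a ≤ 1 := le_trans hale (min_le_left _ _)
  have ha2 : K * a ≤ 1/2 := by
    have h := le_trans hale (le_trans (min_le_right _ _) (min_le_left _ _))
    rw [le_div_iff₀ (by positivity)] at h; linarith only [h]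
  have ha3 : K * a ≤ δ/2 := by
    have h := le_trans hale (le_trans (min_le_right _ _) (le_trans (min_le_right _ _) (min_le_left _ _)))
    rw [le_div_iff₀ (by positivity)] at h; linarith only [h]
  have ha4 : 4*δ*τ*a ≤ 1 := by
    have h := le_trans hale (le_trans (min_le_right _ _) (le_trans (min_le_right _ _)
      (le_trans (min_le_right _ _) (min_le_left _ _))))
    rw [le_div_iff₀ (by positivity)] at h; linarith only [h]
  have ha5 : (C₂ + δ^2) * a ≤ 1/2 := by
    have h := le_trans hale (le_trans (min_le_right _ _) (le_trans (min_le_right _ _)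
      (le_trans (min_le_right _ _) (min_le_right _ _))))
    rw [le_div_iff₀ (by positivity)] at h; linarith only [h]
  have ha3le : a^3 ≤ a^2 := by
    have h := mul_le_mul_of_nonneg_left ha1 (sq_nonneg a)
    linarith only [h]
  set B : ℝ := (δ+τ)*a with hBdef
  have hBpos : 0 < B := by positivity
  clear_value B
  set g : ℝ → ℝ := fun s => τ*s^3 - 2*s^2 + s*(1/τ + B) - a*δ/τ with hg
  have hgcont : Continuous g := by rw [hg]; fun_prop
  clear_value g
  have hKa2 : K*a^2 ≤ (δ/2)*a := by
    have h := mul_le_mul_of_nonneg_right ha3 ha.le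
    linarith only [h]
  -- error bound for g near δa
  have hEbound : ∀ t : ℝ, |t| ≤ K*a^2 → |g (δ*a + t) - t/τ| ≤ C₁ * a^2 := by
    intro t ht
    have hgform : g (δ*a + t) - t/τ = (δ*a+t)*B + τ*(δ*a+t)^3 - 2*(δ*a+t)^2 := by
      simp only [hg]; rw [hBdef]; field_simp; ring
    rw [hgform]
    have hM : |δ*a+t| ≤ (δ+1)*a := by
      have h2 := mul_le_mul_of_nonneg_right ha2 ha.le
      calc |δ*a+t| ≤ |δ*a| + |t| := abs_add_le _ _
        _ ≤ δ*a + K*a^2 := by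
            rw [abs_of_nonneg (by positivity)]
            linarith only [ht]
        _ ≤ (δ+1)*a := by linarith only [h2, ha.le, ha]
    set x := δ*a + t with hx
    have t1 : |x*B| ≤ ((δ+1)*a)*B := by
      rw [abs_mul, abs_of_pos hBpos]
      exact mul_le_mul_of_nonneg_right hM hBpos.le
    have t2 : |τ*x^3| ≤ τ*((δ+1)*a)^3 := by
      rw [abs_mul, abs_of_pos hτ, abs_pow]
      exact mul_le_mul_of_nonneg_left (pow_le_pow_left₀ (abs_nonneg x) hM 3) hτ.le
    have t3 : |2*x^2| ≤ 2*((δ+1)*a)^2 := by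
      rw [abs_mul, abs_of_pos (by norm_num : (0:ℝ) < 2), abs_pow]
      exact mul_le_mul_of_nonneg_left (pow_le_pow_left₀ (abs_nonneg x) hM 2) (by norm_num)
    have tri : |x*B + τ*x^3 - 2*x^2| ≤ |x*B| + |τ*x^3| + |2*x^2| := by
      have h := abs_add_three (x*B) (τ*x^3) (-(2*x^2))
      rw [abs_neg] at h
      rw [show x*B + τ*x^3 - 2*x^2 = x*B + τ*x^3 + -(2*x^2) by ring]
      exact h
    have hfin : ((δ+1)*a)*B + τ*((δ+1)*a)^3 + 2*((δ+1)*a)^2 ≤ C₁ * a^2 := by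
      rw [hBdef, hC₁]
      have h := mul_le_mul_of_nonneg_left ha3le (by positivity : (0:ℝ) ≤ τ*(δ+1)^3)
      ring_nf at h ⊢
      linarith only [h]
    linarith only [tri, t1, t2, t3, hfin]
  -- endpoint signs
  have ha2τpos : 0 < a^2/τ := by positivity
  have hKsplit : K*a^2/τ - C₁*a^2 = a^2/τ := by rw [hK]; field_simp; ring
  have hGhi : 0 ≤ g (δ*a + K*a^2) := by
    have h := hEbound (K*a^2) (by rw [abs_of_nonneg (by positivity)])
    rw [abs_le] at h
    linarith only [h.1, hKsplit, ha2τpos]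
  have hGlo : g (δ*a - K*a^2) ≤ 0 := by
    have h := hEbound (-(K*a^2)) (by rw [abs_neg, abs_of_nonneg (by positivity)])
    rw [show δ*a + -(K*a^2) = δ*a - K*a^2 by ring, abs_le] at h
    have h2 : -(K*a^2)/τ + C₁*a^2 = -(a^2/τ) := by rw [hK]; field_simp; ring
    linarith only [h.2, h2, ha2τpos]
  -- intermediate value theorem
  have hle : δ*a - K*a^2 ≤ δ*a + K*a^2 := by
    linarith only [mul_nonneg hKpos.le (sq_nonneg a)]
  obtain ⟨s, hsmem, hgs⟩ :=
    intermediate_value_Icc hle hgcont.continuousOn ⟨hGlo, hGhi⟩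
  obtain ⟨hslo, hshi⟩ := hsmem
  have hspos : 0 < s := by linarith only [hslo, hKa2, mul_pos hδ ha]
  have hs2δ : s ≤ 2*δ*a := by linarith only [hshi, hKa2, mul_pos hδ ha]
  -- the real root
  set μ₁ : ℝ := s - 1/τ with hμ₁
  clear_value μ₁
  have hμ₁neg : μ₁ < 0 := by
    rw [hμ₁]
    have h : 2*δ*a < 1/τ := by
      rw [lt_div_iff₀ hτ]
      linarith only [ha4, mul_pos (mul_pos hδ hτ) ha]
    linarith only [h, hs2δ, hiτpos]
  have hroot : τ*μ₁^3 + μ₁^2 + (δ+τ)*a*μ₁ + a = 0 := by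
    have h := hgs
    simp only [hg] at h
    rw [hμ₁]
    have e : τ*(s - 1/τ)^3 + (s-1/τ)^2 + (δ+τ)*a*(s-1/τ) + a
        = τ*s^3 - 2*s^2 + s*(1/τ + (δ+τ)*a) - a*δ/τ := by field_simp; ring
    rw [e, ← hBdef]; exact h
  -- the discriminant quantity d = c - s²/4
  set d : ℝ := (3/4)*s^2 - s*(1/τ) + δ*a*(1/τ) + a with hd
  clear_value d
  have habs1 : s - δ*a ≤ K*a^2 := by linarith only [hshi]
  have habs2 : δ*a - s ≤ K*a^2 := by linarith only [hslo]
  have hdsub : |d - a| ≤ C₂ * a^2 := by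
    have h1 : (δ*a - s)*(1/τ) ≤ K*a^2*(1/τ) := mul_le_mul_of_nonneg_right habs2 hiτpos.le
    have h2 : (s - δ*a)*(1/τ) ≤ K*a^2*(1/τ) := mul_le_mul_of_nonneg_right habs1 hiτpos.le
    have h3 : s^2 ≤ 4*δ^2*a^2 := by
      have h := mul_le_mul hs2δ hs2δ hspos.le (by positivity : (0:ℝ) ≤ 2*δ*a)
      ring_nf at h ⊢
      linarith only [h]
    have hC2e : C₂ * a^2 = 4*δ^2*a^2 + K*a^2*(1/τ) := by rw [hC₂]; field_simp
    have hnn : (0:ℝ) ≤ δ^2*a^2 := mul_nonneg (sq_nonneg δ) (sq_nonneg a)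
    rw [abs_le, hd]
    constructor
    · linarith only [h2, hC2e, sq_nonneg s, hnn]
    · linarith only [h1, h3, hC2e, hnn]
  have hC2a : C₂ * a ≤ 1/2 := by
    linarith only [ha5, mul_nonneg (sq_nonneg δ) ha.le]
  have hdlo : a/2 ≤ d := by
    rw [abs_le] at hdsub
    linarith only [hdsub.1, mul_le_mul_of_nonneg_right hC2a ha.le]
  have hdpos : 0 < d := by linarith only [hdlo, ha]
  set β : ℝ := Real.sqrt d with hβ
  have hβpos : 0 < β := by rw [hβ]; exact Real.sqrt_pos.mpr hdpos
  have hβ2 : β^2 = d := by rw [hβ]; exact Real.sq_sqrt hdpos.le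
  clear_value β
  have hsa : 0 < Real.sqrt a := Real.sqrt_pos.mpr ha
  have hsasq : Real.sqrt a * Real.sqrt a = a := Real.mul_self_sqrt ha.le
  have hβdiff : |β - Real.sqrt a| ≤ C₂ * (a * Real.sqrt a) := by
    have hdiffsq : (β - Real.sqrt a)*(β + Real.sqrt a) = d - a := by
      linear_combination hβ2 - hsasq
    have key : |β - Real.sqrt a| * Real.sqrt a ≤ |d - a| := by
      calc |β - Real.sqrt a| * Real.sqrt a ≤ |β - Real.sqrt a| * (β + Real.sqrt a) := by
            apply mul_le_mul_of_nonneg_left _ (abs_nonneg _)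
            linarith only [hβpos]
        _ = |(β - Real.sqrt a)*(β + Real.sqrt a)| := by
            rw [abs_mul, abs_of_pos (by linarith only [hβpos, hsa] : (0:ℝ) < β + Real.sqrt a)]
        _ = |d - a| := by rw [hdiffsq]
    have h2 : |d - a| ≤ (C₂ * (a * Real.sqrt a)) * Real.sqrt a := by
      calc |d - a| ≤ C₂ * a^2 := hdsub
        _ = (C₂ * (a * Real.sqrt a)) * Real.sqrt a := by
            rw [show (C₂ * (a * Real.sqrt a)) * Real.sqrt a
              = C₂ * a * (Real.sqrt a * Real.sqrt a) by ring, hsasq]; ring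
    exact le_of_mul_le_mul_right (le_trans key h2) hsa
  -- the complex root
  set μ₂ : ℂ := -(s:ℂ)/2 + (β:ℂ)*Complex.I with hμ₂
  clear_value μ₂
  have hμ₂re : μ₂.re = -s/2 := by rw [hμ₂]; simp
  have hconj : (starRingEnd ℂ) μ₂ = -(s:ℂ)/2 - (β:ℂ)*Complex.I := by
    rw [hμ₂]
    simp [map_add, map_mul, map_ofNat, Complex.conj_ofReal, Complex.conj_I]
    ring
  refine ⟨μ₁, μ₂, ?_, ?_, ?_, hμ₁neg, by rw [hμ₂re]; linarith only [hspos]⟩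
  · -- factorization
    intro μ
    have h1c : (τ:ℂ)*(μ₁:ℂ)^3 + (μ₁:ℂ)^2 + ((δ:ℂ)+(τ:ℂ))*(a:ℂ)*(μ₁:ℂ) + (a:ℂ) = 0 := by
      exact_mod_cast congrArg (fun x : ℝ => (x:ℂ)) hroot
    have hre : τ*s = τ*μ₁ + 1 := by rw [hμ₁]; field_simp; ring
    have hrec : (τ:ℂ)*(s:ℂ) = (τ:ℂ)*(μ₁:ℂ) + 1 := by
      exact_mod_cast congrArg (fun x : ℝ => (x:ℂ)) hre
    have hq : τ*((s/2)^2 + β^2) = τ*μ₁^2 + μ₁ + (δ+τ)*a := by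
      rw [hβ2, hd, hμ₁]; field_simp; ring
    have hqc : (τ:ℂ)*(((s:ℂ)/2)^2 + (β:ℂ)^2) = (τ:ℂ)*(μ₁:ℂ)^2 + (μ₁:ℂ) + ((δ:ℂ)+(τ:ℂ))*(a:ℂ) := by
      exact_mod_cast congrArg (fun x : ℝ => (x:ℂ)) hq
    rw [hconj, hμ₂, hBdef]
    push_cast
    linear_combination h1c + ((μ₁:ℂ)*μ - μ^2) * hrec + ((μ₁:ℂ) - μ) * hqc
      + ((τ:ℂ)*(μ - (μ₁:ℂ))*(β:ℂ)^2) * Complex.I_sq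
  · -- bound on μ₁
    have he : μ₁ + 1/τ = s := by rw [hμ₁]; ring
    rw [he, abs_of_pos hspos]
    linarith only [hs2δ, (mul_pos hKpos ha).le, (mul_pos hC₂pos ha).le, ha.le]
  · -- bound on μ₂
    have hz : μ₂ - (Complex.I*((Real.sqrt a : ℝ):ℂ) - ((δ/2*a : ℝ):ℂ))
        = ((δ/2*a - s/2 : ℝ):ℂ) + ((β - Real.sqrt a : ℝ):ℂ)*Complex.I := by
      rw [hμ₂]; push_cast; ring
    rw [hz]
    have haq : a ≤ Real.sqrt a := by
      calc a = Real.sqrt (a^2) := (Real.sqrt_sq ha.le).symm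
        _ ≤ Real.sqrt a := Real.sqrt_le_sqrt (by
            have h := mul_le_mul_of_nonneg_left ha1 ha.le
            ring_nf at h ⊢
            linarith only [h])
    have hKaa : K*(a*a) ≤ K*(a*Real.sqrt a) :=
      mul_le_mul_of_nonneg_left (mul_le_mul_of_nonneg_left haq ha.le) hKpos.le
    have hb1 : |δ/2*a - s/2| ≤ (K/2) * (a * Real.sqrt a) := by
      rw [abs_le]
      constructor
      · linarith only [habs1, hKaa]
      · linarith only [habs2, hKaa]
    calc ‖((δ/2*a - s/2 : ℝ):ℂ) + ((β - Real.sqrt a : ℝ):ℂ)*Complex.I‖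
        ≤ ‖((δ/2*a - s/2 : ℝ):ℂ)‖ + ‖((β - Real.sqrt a : ℝ):ℂ)*Complex.I‖ := norm_add_le _ _
      _ = |δ/2*a - s/2| + |β - Real.sqrt a| := by
          rw [norm_mul, Complex.norm_I, Complex.norm_real, Complex.norm_real]; simp
      _ ≤ (K/2) * (a * Real.sqrt a) + C₂ * (a * Real.sqrt a) := add_le_add hb1 hβdiff
      _ ≤ (2*δ + K/2 + C₂ + 1) * (a * Real.sqrt a) := by
          have h : (0:ℝ) ≤ (2*δ+1)*(a*Real.sqrt a) :=
            mul_nonneg (by positivity) (mul_nonneg ha.le hsa.le)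
          linarith only [h]

/-- Small-frequency root asymptotics for the MGT characteristic cubic
`τμ³ + μ² + (δ+τ)r^{2σ}μ + r^{2σ} = 0`: there is `ε₀ > 0` such that for `0 < r ≤ ε₀`
the roots are `μ₁ = -1/τ + O(r^{2σ})` (real) and `μ_{2,3} = ±ir^σ - (δ/2)r^{2σ} + O(r^{3σ})`
(a complex conjugate pair), all with negative real part. -/
theorem stmt12 (τ δ σ : ℝ) (hτ : 0 < τ) (hδ : 0 < δ) (hσ : 0 < σ) :
    ∃ ε₀ C : ℝ, 0 < ε₀ ∧ 0 < C ∧ ∀ r : ℝ, 0 < r → r ≤ ε₀ →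
      ∃ (μ₁ : ℝ) (μ₂ : ℂ),
        (∀ μ : ℂ,
          (τ : ℂ) * μ^3 + μ^2 + (((δ+τ) * r ^ (2*σ) : ℝ) : ℂ) * μ + ((r ^ (2*σ) : ℝ) : ℂ)
            = (τ : ℂ) * (μ - (μ₁ : ℂ)) * (μ - μ₂) * (μ - (starRingEnd ℂ) μ₂)) ∧
        |μ₁ + 1/τ| ≤ C * r ^ (2*σ) ∧
        ‖μ₂ - (Complex.I * ((r ^ σ : ℝ) : ℂ) - ((δ/2 * r ^ (2*σ) : ℝ) : ℂ))‖ ≤ C * r ^ (3*σ) ∧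
        μ₁ < 0 ∧ μ₂.re < 0 := by
  obtain ⟨amax, C, hamax, hC, H⟩ := mgt_aux τ δ hτ hδ
  refine ⟨amax ^ (1/(2*σ)), C, by positivity, hC, ?_⟩
  intro r hr hrle
  have h2σ : 0 < 2*σ := by linarith
  have hapos : 0 < r ^ (2*σ) := Real.rpow_pos_of_pos hr _
  have hale : r ^ (2*σ) ≤ amax := by
    calc r ^ (2*σ) ≤ (amax ^ (1/(2*σ))) ^ (2*σ) :=
          Real.rpow_le_rpow hr.le hrle (le_of_lt h2σ)
      _ = amax := by
          rw [← Real.rpow_mul hamax.le, one_div, inv_mul_cancel₀ (ne_of_gt h2σ), Real.rpow_one]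
  obtain ⟨μ₁, μ₂, hfac, hb1, hb2, hneg1, hneg2⟩ := H (r^(2*σ)) hapos hale
  have hsqrt : Real.sqrt (r^(2*σ)) = r ^ σ := by
    have h : r^(2*σ) = (r^σ)^(2:ℕ) := by
      rw [← Real.rpow_natCast (r^σ) 2, ← Real.rpow_mul hr.le]
      norm_num
      ring_nf
    rw [h, Real.sqrt_sq (Real.rpow_nonneg hr.le σ)]
  have h3σ : r^(2*σ) * r^σ = r^(3*σ) := by
    rw [← Real.rpow_add hr]; ring_nf
  rw [hsqrt, h3σ] at hb2
  exact ⟨μ₁, μ₂, hfac, hb1, hb2, hneg1, hneg2⟩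
end

section
/- Let $\tau, \delta, \sigma > 0$. There exists $N_0 > 0$ such that for $r \geqslant N_0$, the three roots of $\tau\mu^3 + \mu^2 + (\delta+\tau)r^{2\sigma}\mu + r^{2\sigma} = 0$ satisfy $\mu_1 = -\frac{1}{\delta+\tau} + O(r^{-\sigma})$ and $\mu_{2,3} = \pm i\sqrt{\frac{\delta+\tau}{\tau}}\, r^{\sigma} - \frac{\delta}{2\tau(\delta+\tau)} + O(r^{-\sigma})$ as $r \to +\infty$. In particular, the real parts of all roots are bounded above by a negative constant $-c$ uniformly for $r \geqslant N_0$. -/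
set_option maxHeartbeats 1000000

lemma sqrt_sub_abs_le {a b : ℝ} (ha : 0 ≤ a) (hb : 0 < b) :
    |Real.sqrt a - Real.sqrt b| ≤ |a - b| / Real.sqrt b := by
  have hsb : 0 < Real.sqrt b := Real.sqrt_pos.mpr hb
  rw [le_div_iff₀ hsb]
  have h2 := Real.sq_sqrt ha
  have h3 := Real.sq_sqrt hb.le
  have h1 : (Real.sqrt a - Real.sqrt b) * (Real.sqrt a + Real.sqrt b) = a - b := by
    nlinarith
  have h4 : 0 ≤ Real.sqrt a := Real.sqrt_nonneg a
  calc |Real.sqrt a - Real.sqrt b| * Real.sqrt b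
      ≤ |Real.sqrt a - Real.sqrt b| * (Real.sqrt a + Real.sqrt b) :=
        mul_le_mul_of_nonneg_left (by linarith) (abs_nonneg _)
    _ = |(Real.sqrt a - Real.sqrt b) * (Real.sqrt a + Real.sqrt b)| := by
        rw [abs_mul, abs_of_nonneg (a := Real.sqrt a + Real.sqrt b) (by linarith)]
    _ = |a - b| := by rw [h1]

lemma mgt_core (τ δ : ℝ) (hτ : 0 < τ) (hδ : 0 < δ) :
    ∃ S₀ c C : ℝ, 1 ≤ S₀ ∧ 0 < c ∧ 0 < C ∧ ∀ s : ℝ, S₀ ≤ s →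
      ∃ (μ₁ : ℝ) (μ₂ : ℂ),
        (∀ μ : ℂ, (τ:ℂ)*μ^3 + μ^2 + (((δ+τ)*s^2 : ℝ):ℂ)*μ + ((s^2 : ℝ):ℂ)
            = (τ:ℂ)*(μ - (μ₁:ℂ))*(μ - μ₂)*(μ - (starRingEnd ℂ) μ₂)) ∧
        |μ₁ + 1/(δ+τ)| ≤ C/s ∧
        ‖μ₂ - (Complex.I * ((Real.sqrt ((δ+τ)/τ) * s : ℝ):ℂ)
            - ((δ/(2*τ*(δ+τ)) : ℝ):ℂ))‖ ≤ C/s ∧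
        μ₁ ≤ -c ∧ μ₂.re ≤ -c := by
  set a := δ + τ with ha_def
  have ha : 0 < a := by positivity
  clear_value a
  set K : ℝ := δ / a^3 with hK_def
  have hK : 0 < K := by positivity
  clear_value K
  set D : ℝ := 2*K/a with hD_def
  have hD : 0 < D := by positivity
  clear_value D
  set P : ℝ := 1/τ + 2/a with hP_def
  have hP : 0 < P := by positivity
  clear_value P
  set M : ℝ := 2/a + 1 with hM_def
  have hM : 0 < M := by positivity
  clear_value M
  set m : ℝ := min (min 1 (K/(2*M))) (min (1/a) (δ/(2*τ*a))) with hm_def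
  have hm : 0 < m := by
    rw [hm_def]
    exact lt_min (lt_min one_pos (by positivity)) (lt_min (by positivity) (by positivity))
  have hm1 : m ≤ 1 := by
    rw [hm_def]; exact (min_le_left _ _).trans (min_le_left _ _)
  have hmK : m ≤ K/(2*M) := by
    rw [hm_def]; exact (min_le_left _ _).trans (min_le_right _ _)
  have hma : m ≤ 1/a := by
    rw [hm_def]; exact (min_le_right _ _).trans (min_le_left _ _)
  have hmδ : m ≤ δ/(2*τ*a) := by
    rw [hm_def]; exact (min_le_right _ _).trans (min_le_right _ _)
  clear_value m
  set M₂ : ℝ := 2*K*a/τ + P^2/4 with hM₂_def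
  have hM₂ : 0 < M₂ := by rw [hM₂_def]; positivity
  have hsa : 0 < Real.sqrt (a/τ) := Real.sqrt_pos.mpr (by positivity)
  refine ⟨1 + Real.sqrt (D/m) + Real.sqrt (τ*P^2/(2*a) + 1),
    min (1/a) (δ/(4*τ*a)), D + M₂ / Real.sqrt (a/τ),
    by linarith [Real.sqrt_nonneg (D/m), Real.sqrt_nonneg (τ*P^2/(2*a) + 1)],
    lt_min (by positivity) (by positivity),
    by positivity, ?_⟩
  intro s hs
  have hsq1 : 0 ≤ Real.sqrt (D/m) := Real.sqrt_nonneg _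
  have hsq2 : 0 ≤ Real.sqrt (τ*P^2/(2*a) + 1) := Real.sqrt_nonneg _
  have hs1 : 1 ≤ s := by linarith
  have hs0 : 0 < s := by linarith
  have hsqDm : D/m ≤ s^2 := by
    have h := Real.sq_sqrt (show (0:ℝ) ≤ D/m by positivity)
    calc D/m = Real.sqrt (D/m)^2 := h.symm
      _ ≤ s^2 := pow_le_pow_left₀ hsq1 (by linarith) 2
  have hs2 : τ*P^2/(2*a) + 1 ≤ s^2 := by
    have h := Real.sq_sqrt (show (0:ℝ) ≤ τ*P^2/(2*a) + 1 by positivity)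
    calc τ*P^2/(2*a) + 1 = Real.sqrt (τ*P^2/(2*a) + 1)^2 := h.symm
      _ ≤ s^2 := pow_le_pow_left₀ hsq2 (by linarith) 2
  set ε : ℝ := D/s^2 with hε_def
  have hε0 : 0 < ε := by positivity
  have hεs : ε * s^2 = D := by rw [hε_def]; field_simp
  have hεm : ε ≤ m := by
    rw [hε_def, div_le_iff₀ (by positivity)]
    rw [div_le_iff₀ hm] at hsqDm
    linarith
  clear_value ε
  have hε1 : ε ≤ 1 := hεm.trans hm1
  have hεK : ε ≤ K/(2*M) := hεm.trans hmK
  have hεa : ε ≤ 1/a := hεm.trans hma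
  have hεδ : ε ≤ δ/(2*τ*a) := hεm.trans hmδ
  -- real root by IVT
  set g : ℝ → ℝ := fun x => τ*x^3 + x^2 + a*s^2*x + s^2 with hg_def
  have hgc : Continuous g := by rw [hg_def]; fun_prop
  set x₀ : ℝ := -1/a with hx₀_def
  have hx₀neg : x₀ < 0 := by
    rw [hx₀_def]
    exact div_neg_of_neg_of_pos (by norm_num) ha
  have hgx₀' : τ*x₀^3 + x₀^2 + a*s^2*x₀ + s^2 = K := by
    rw [hx₀_def, hK_def, ha_def]
    field_simp
    ring
  have hgx₀ : g x₀ = K := hgx₀'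
  clear_value x₀
  clear_value g
  have hgleft : g (x₀ - ε) ≤ -K/2 := by
    have h2 : a*s^2*ε = 2*K := by
      have : a * (ε * s^2) = a * D := by rw [hεs]
      rw [hD_def] at this
      field_simp at this
      linarith [this]
    have hexp : g (x₀ - ε) = -K +
        (τ*(-3*x₀^2*ε + 3*x₀*ε^2 - ε^3) + (-2*x₀*ε + ε^2)) := by
      simp only [hg_def]
      linear_combination hgx₀' - h2
    have e1 : τ*(-3*x₀^2*ε + 3*x₀*ε^2 - ε^3) ≤ 0 := by
      apply mul_nonpos_of_nonneg_of_nonpos hτ.le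
      have t1 : 0 ≤ x₀^2*ε := mul_nonneg (sq_nonneg _) hε0.le
      have t2 : 0 ≤ (-x₀)*ε^2 := mul_nonneg (by linarith) (sq_nonneg _)
      have t3 : (0:ℝ) ≤ ε^3 := by positivity
      linarith only [t1, t2, t3]
    have e2 : -2*x₀*ε + ε^2 ≤ ε*M := by
      have u0 : -2*x₀*ε = ε*(M-1) := by
        rw [hx₀_def, hM_def]; ring
      have u2 : ε^2 ≤ ε := by
        calc ε^2 = ε*ε := sq ε
          _ ≤ ε*1 := mul_le_mul_of_nonneg_left hε1 hε0.le
          _ = ε := mul_one ε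
      linarith only [u0, u2]
    have e3 : ε*M ≤ K/2 := by
      rw [le_div_iff₀ (by positivity)] at hεK
      linarith only [hεK]
    linarith only [hexp, e1, e2, e3]
  have hle : x₀ - ε ≤ x₀ := by linarith
  have hmem : (0:ℝ) ∈ Set.Icc (g (x₀ - ε)) (g x₀) := by
    constructor
    · linarith
    · rw [hgx₀]; linarith
  obtain ⟨μ₁, hμ₁I, hgμ₁⟩ := intermediate_value_Icc hle hgc.continuousOn hmem
  obtain ⟨hμ₁l, hμ₁u⟩ := hμ₁I
  have hroot : τ*μ₁^3 + μ₁^2 + a*s^2*μ₁ + s^2 = 0 := by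
    have : g μ₁ = 0 := hgμ₁
    rw [hg_def] at this
    exact this
  have hμ₁neg : μ₁ < 0 := lt_of_le_of_lt hμ₁u hx₀neg
  have hμ₁ne : μ₁ ≠ 0 := ne_of_lt hμ₁neg
  have hμ₁l' : -(1/a) - ε ≤ μ₁ := by
    rw [hx₀_def] at hμ₁l
    have : (-1:ℝ)/a = -(1/a) := by ring
    linarith
  have hμ₁ub : μ₁ ≤ -(1/a) := by
    rw [hx₀_def] at hμ₁u
    have : (-1:ℝ)/a = -(1/a) := by ring
    linarith
  have hμ₁lb : -(2/a) ≤ μ₁ := by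
    have h5 : -(2/a) = -(1/a) - 1/a := by ring
    linarith
  have hμ₁b : |μ₁ + 1/a| ≤ ε := by
    rw [abs_le]
    constructor <;> linarith
  -- quadratic factor
  set p : ℝ := μ₁ + 1/τ with hp_def
  set q : ℝ := -s^2/(τ*μ₁) with hq_def
  have hq_alt : q = s^2/(τ*(-μ₁)) := by
    rw [hq_def]; field_simp
  have hτμpos : 0 < τ*(-μ₁) := mul_pos hτ (by linarith)
  have hq0 : 0 < q := by
    rw [hq_alt]; exact div_pos (by positivity) hτμpos
  have hμq : τ*q*μ₁ = -s^2 := by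
    rw [hq_def]; field_simp
  have hτp : τ*p = τ*μ₁ + 1 := by
    rw [hp_def]; field_simp
  have hcoef : a*s^2 = τ*q - τ*p*μ₁ := by
    rw [hq_def, hp_def]
    field_simp
    linear_combination hroot
  have hp2 : p^2 ≤ P^2 := by
    rw [hp_def, hP_def]
    have h1 : 0 < 1/τ := by positivity
    have h2 : 0 < 2/a := by positivity
    apply sq_le_sq'
    · linarith
    · linarith
  have hq_low : a*s^2/(2*τ) ≤ q := by
    have h1 : s^2/(τ*(2/a)) ≤ s^2/(τ*(-μ₁)) := by
      apply div_le_div_of_nonneg_left (by positivity) hτμpos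
      exact mul_le_mul_of_nonneg_left (by linarith) hτ.le
    have h2 : a*s^2/(2*τ) = s^2/(τ*(2/a)) := by
      field_simp
    rw [hq_alt, h2]; exact h1
  have hqd : |q - a*s^2/τ| ≤ 2*K*a/τ := by
    have h1μ : |1/μ₁| ≤ a := by
      rw [abs_div, abs_one, abs_of_neg hμ₁neg, div_le_iff₀ (by linarith)]
      have haa : a*(1/a) = 1 := by field_simp
      have := mul_le_mul_of_nonneg_left (show 1/a ≤ -μ₁ by linarith) ha.le
      linarith only [this, haa]
    have hqe : q - a*s^2/τ = -((s^2/τ)*a) * ((μ₁ + 1/a) * (1/μ₁)) := by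
      rw [hq_def]; field_simp; ring
    rw [hqe, abs_mul, abs_neg, abs_of_nonneg (show (0:ℝ) ≤ (s^2/τ)*a by positivity),
      abs_mul]
    have hb : |μ₁+1/a| * |1/μ₁| ≤ ε * a :=
      mul_le_mul hμ₁b h1μ (abs_nonneg _) hε0.le
    calc (s^2/τ)*a * (|μ₁+1/a| * |1/μ₁|) ≤ (s^2/τ)*a * (ε*a) :=
          mul_le_mul_of_nonneg_left hb (by positivity)
      _ = a^2/τ * (ε*s^2) := by ring
      _ = 2*K*a/τ := by rw [hεs, hD_def]; field_simp
  clear_value p q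
  set Δ : ℝ := q - p^2/4 with hΔ_def
  have hΔlow : a/(2*τ) ≤ Δ := by
    rw [hΔ_def]
    have haux : a/(2*τ)*(τ*P^2/(2*a)+1) = P^2/4 + a/(2*τ) := by
      field_simp; ring
    have h1 : a/(2*τ)*(τ*P^2/(2*a)+1) ≤ a/(2*τ)*s^2 :=
      mul_le_mul_of_nonneg_left hs2 (by positivity)
    have h2 : a/(2*τ)*s^2 = a*s^2/(2*τ) := by ring
    linarith [hq_low, hp2]
  have hΔ0 : 0 < Δ := lt_of_lt_of_le (by positivity) hΔlow
  have hΔval : Δ = q - p^2/4 := hΔ_def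
  clear_value Δ
  set w : ℝ := Real.sqrt Δ with hw_def
  have hw2 : w^2 = Δ := Real.sq_sqrt hΔ0.le
  have hw0 : 0 ≤ w := Real.sqrt_nonneg _
  set μ₂ : ℂ := (↑(-(p/2)) : ℂ) + ↑w * Complex.I with hμ₂_def
  have hconj : (starRingEnd ℂ) μ₂ = (↑(-(p/2)) : ℂ) - ↑w * Complex.I := by
    rw [hμ₂_def, map_add, map_mul, Complex.conj_ofReal, Complex.conj_ofReal,
      Complex.conj_I]
    ring
  have hre : μ₂.re = -(p/2) := by
    rw [hμ₂_def]; simp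
  clear_value μ₂
  refine ⟨μ₁, μ₂, ?_, ?_, ?_, ?_, ?_⟩
  · -- factorization
    intro μ
    have hc1 : ((a:ℂ))*(s:ℂ)^2 = (τ:ℂ)*(q:ℂ) - (τ:ℂ)*(p:ℂ)*(μ₁:ℂ) := by
      exact_mod_cast hcoef
    have hc2 : (τ:ℂ)*(q:ℂ)*(μ₁:ℂ) = -(s:ℂ)^2 := by exact_mod_cast hμq
    have hc3 : ((w:ℂ))^2 = (q:ℂ) - (p:ℂ)^2/4 := by
      have h : w^2 = q - p^2/4 := by rw [hw2, hΔval]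
      exact_mod_cast h
    have hc4 : (τ:ℂ)*(p:ℂ) = (τ:ℂ)*(μ₁:ℂ) + 1 := by exact_mod_cast hτp
    rw [hconj, hμ₂_def]
    push_cast
    have hc5 : (Complex.I)^2 = -1 := Complex.I_sq
    linear_combination (-(μ^2))*hc4 + μ*hc1 + hc2 - (τ:ℂ)*(μ-(μ₁:ℂ))*hc3
      + (τ:ℂ)*(μ-(μ₁:ℂ))*((w:ℝ):ℂ)^2*hc5
  · -- real root bound
    have hss : s ≤ s^2 := by
      calc s = s*1 := (mul_one s).symm
        _ ≤ s*s := mul_le_mul_of_nonneg_left hs1 hs0.le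
        _ = s^2 := (sq s).symm
    have h1 : |μ₁ + 1/a| ≤ D/s := by
      refine hμ₁b.trans ?_
      rw [hε_def]
      exact div_le_div_of_nonneg_left hD.le hs0 hss
    refine h1.trans ?_
    gcongr
    exact le_add_of_nonneg_right (by positivity)
  · -- complex root bound
    have hBpos : 0 < a/τ*s^2 := by positivity
    have hBs : Real.sqrt (a/τ*s^2) = Real.sqrt (a/τ) * s := by
      rw [Real.sqrt_mul (by positivity), Real.sqrt_sq hs0.le]
    have hy0 : |w - Real.sqrt (a/τ)*s| ≤ |Δ - a/τ*s^2| / (Real.sqrt (a/τ)*s) := by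
      have h := sqrt_sub_abs_le hΔ0.le hBpos
      rw [hBs] at h
      rw [hw_def]
      exact h
    have hnum : |Δ - a/τ*s^2| ≤ M₂ := by
      have he : Δ - a/τ*s^2 = (q - a*s^2/τ) + (-(p^2/4)) := by rw [hΔval]; ring
      rw [he, hM₂_def]
      have h := abs_add_le (q - a*s^2/τ) (-(p^2/4))
      have h2 : |(-(p^2/4))| = p^2/4 := by
        rw [abs_neg, abs_of_nonneg (by positivity)]
      linarith
    set x : ℝ := -(p/2) + δ/(2*τ*a) with hx_def
    set y : ℝ := w - Real.sqrt (a/τ)*s with hy_def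
    have hkey : μ₂ - (Complex.I * ((Real.sqrt (a/τ) * s : ℝ):ℂ) - ((δ/(2*τ*a) : ℝ):ℂ))
        = ((x : ℝ):ℂ) + ((y : ℝ):ℂ) * Complex.I := by
      rw [hx_def, hy_def, hμ₂_def]; push_cast; ring
    rw [hkey]
    clear_value x y
    have hre2 : (((x : ℝ):ℂ) + ((y : ℝ):ℂ) * Complex.I).re = x := by simp
    have him2 : (((x : ℝ):ℂ) + ((y : ℝ):ℂ) * Complex.I).im = y := by simp
    have hnorm : ‖((x : ℝ):ℂ) + ((y : ℝ):ℂ) * Complex.I‖ ≤ |x| + |y| := by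
      have h := Complex.norm_le_abs_re_add_abs_im (((x : ℝ):ℂ) + ((y : ℝ):ℂ) * Complex.I)
      rw [hre2, him2] at h
      exact h
    refine hnorm.trans ?_
    have hxe : -(p/2) + δ/(2*τ*a) = -((μ₁ + 1/a)/2) := by
      rw [hp_def, ha_def]; field_simp; ring
    have hx_bound : |x| ≤ ε/2 := by
      rw [hx_def, hxe, abs_neg, abs_div]
      have h5 : |(2:ℝ)| = 2 := by norm_num
      rw [h5]
      linarith [hμ₁b]
    have hss : s ≤ s^2 := by
      calc s = s*1 := (mul_one s).symm
        _ ≤ s*s := mul_le_mul_of_nonneg_left hs1 hs0.le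
        _ = s^2 := (sq s).symm
    have hεhalf : ε/2 ≤ D/s := by
      have h9 : ε ≤ D/s := by
        rw [hε_def]
        exact div_le_div_of_nonneg_left hD.le hs0 hss
      linarith
    have hy2 : |Δ - a/τ*s^2| / (Real.sqrt (a/τ)*s) ≤ (M₂ / Real.sqrt (a/τ))/s := by
      rw [div_div]
      gcongr
    have hsum : D/s + (M₂ / Real.sqrt (a/τ))/s = (D + M₂ / Real.sqrt (a/τ))/s := by
      ring
    have hyb : |y| ≤ (M₂ / Real.sqrt (a/τ))/s := by
      exact hy0.trans hy2
    linarith [hyb]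
  · -- μ₁ negative
    have h := min_le_left (1/a) (δ/(4*τ*a))
    linarith [hμ₁ub]
  · -- μ₂.re negative
    rw [hre]
    have hid : 1/τ - 1/a = δ/(τ*a) := by
      rw [ha_def]; field_simp; ring
    have h := min_le_right (1/a) (δ/(4*τ*a))
    have h3 : δ/(2*τ*a) = δ/(τ*a)/2 := by ring
    have h4 : δ/(4*τ*a) = δ/(τ*a)/4 := by ring
    have hplow : δ/(τ*a)/2 ≤ p := by
      rw [hp_def]
      linarith [hμ₁l', hεδ]
    linarith
/-- Large-frequency root asymptotics for the MGT characteristic cubic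
`τμ³ + μ² + (δ+τ)r^{2σ}μ + r^{2σ} = 0`: there is `N₀ > 0` such that for `r ≥ N₀`
the roots are `μ₁ = -1/(δ+τ) + O(r^{-σ})` (real) and
`μ_{2,3} = ±i√((δ+τ)/τ) r^σ - δ/(2τ(δ+τ)) + O(r^{-σ})` (a conjugate pair),
and all real parts are bounded above by a negative constant `-c` uniformly in `r ≥ N₀`. -/
theorem stmt13 (τ δ σ : ℝ) (hτ : 0 < τ) (hδ : 0 < δ) (hσ : 0 < σ) :
    ∃ N₀ c C : ℝ, 0 < N₀ ∧ 0 < c ∧ 0 < C ∧ ∀ r : ℝ, N₀ ≤ r →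
      ∃ (μ₁ : ℝ) (μ₂ : ℂ),
        (∀ μ : ℂ,
          (τ : ℂ) * μ^3 + μ^2 + (((δ+τ) * r ^ (2*σ) : ℝ) : ℂ) * μ + ((r ^ (2*σ) : ℝ) : ℂ)
            = (τ : ℂ) * (μ - (μ₁ : ℂ)) * (μ - μ₂) * (μ - (starRingEnd ℂ) μ₂)) ∧
        |μ₁ + 1/(δ+τ)| ≤ C * r ^ (-σ) ∧
        ‖μ₂ - (Complex.I * ((Real.sqrt ((δ+τ)/τ) * r ^ σ : ℝ) : ℂ)
            - ((δ/(2*τ*(δ+τ)) : ℝ) : ℂ))‖ ≤ C * r ^ (-σ) ∧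
        μ₁ ≤ -c ∧ μ₂.re ≤ -c := by
  obtain ⟨S₀, c, C, hS₀1, hc, hC, hmain⟩ := mgt_core τ δ hτ hδ
  have hS₀0 : 0 < S₀ := lt_of_lt_of_le one_pos hS₀1
  refine ⟨max 1 (S₀ ^ (1/σ)), c, C, lt_of_lt_of_le one_pos (le_max_left _ _), hc, hC, ?_⟩
  intro r hr
  have hr1 : 1 ≤ r := le_trans (le_max_left _ _) hr
  have hr0 : 0 < r := by linarith
  have hrs : S₀ ≤ r ^ σ := by
    have h1 : S₀ ^ (1/σ) ≤ r := le_trans (le_max_right _ _) hr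
    have h2 : (S₀ ^ (1/σ)) ^ σ ≤ r ^ σ := Real.rpow_le_rpow (by positivity) h1 hσ.le
    rwa [← Real.rpow_mul hS₀0.le, one_div, inv_mul_cancel₀ hσ.ne', Real.rpow_one] at h2
  obtain ⟨μ₁, μ₂, hfac, hb1, hb2, hn1, hn2⟩ := hmain (r ^ σ) hrs
  have hsq : (r ^ σ)^2 = r ^ (2*σ) := by
    rw [← Real.rpow_natCast (r ^ σ) 2, ← Real.rpow_mul hr0.le]
    norm_num [mul_comm]
  have hneg : C / r ^ σ = C * r ^ (-σ) := by
    rw [Real.rpow_neg hr0.le]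
    ring
  refine ⟨μ₁, μ₂, ?_, ?_, ?_, hn1, hn2⟩
  · intro μ
    have h := hfac μ
    rw [hsq] at h
    exact h
  · rw [← hneg]; exact hb1
  · rw [← hneg]; exact hb2
end
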